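/- Let a > 1 and let γ = (γ_k)_{k∈ℤ} be a bounded complex sequence with q₁(γ) < ∞. Then D_γ is of class C¹(A_a): there exists a bounded operator B on ℓ²(ℤ) such that ⟨A_a φ, D_γ ψ⟩ − ⟨φ, D_γ(A_a ψ)⟩ = ⟨φ, Bψ⟩ for all φ, ψ ∈ D_X. Moreover there is a constant C_a > 0 depending only on a with ‖B‖ ≤ C_a·q₁(γ). -/

import Mathlib

/-!
On `D_X` the conjugate operator is the norm-convergent series
`A_a φ = ½ ∑_{m ≠ 0} a^{-|m|} τ_m (2X + m) φ`, with `τ_m` the translation by `m`, so by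
continuity of the inner product the commutator form is a sum over `m`. Pairing the `m`-th term
of `⟪A_a φ, D_γ ψ⟫` with the `(-m)`-th term of `⟪φ, D_γ A_a ψ⟫` and shifting `k ↦ k + m` leaves
`⟪φ, W_m ψ⟫` for the weighted shift `(W_m ψ)_k = (2k + m)(γ_{k+m} - γ_k) ψ_{k+m}`. Telescoping
`γ_{k+m} - γ_k` into `|m|` unit differences gives `‖W_m‖ ≤ 4 m² q₁(γ)`, so
`B = ½ ∑ a^{-|m|} W_m` converges in operator norm and `‖B‖ ≤ 2 (∑ m² a^{-|m|}) q₁(γ)`.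
-/

open scoped ComplexInnerProductSpace

noncomputable section

/-- `ℓ²(ℤ)`. -/
abbrev l2Z : Type := lp (fun _ : ℤ => ℂ) 2

/-- The norm `q₁(γ) = sup_k |γ_k| + sup_k |k·(γ_k − γ_{k+1})|`. -/
noncomputable def q1 (γ : ℤ → ℂ) : ℝ :=
  (⨆ k : ℤ, ‖γ k‖) + ⨆ k : ℤ, ‖(k : ℂ) * (γ k - γ (k + 1))‖

namespace l2Z

theorem memℓp_iff {f : ℤ → ℂ} : Memℓp f 2 ↔ Summable fun k => ‖f k‖ ^ 2 := by
  rw [memℓp_gen_iff (by norm_num)]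
  norm_num

theorem summable_norm_sq (f : l2Z) : Summable fun k => ‖f k‖ ^ 2 :=
  memℓp_iff.1 f.2

theorem norm_sq_eq_tsum (f : l2Z) : ‖f‖ ^ 2 = ∑' k, ‖f k‖ ^ 2 := by
  simpa using lp.norm_rpow_eq_tsum (p := 2) (by norm_num) f

theorem norm_le_of_tsum_le {f : l2Z} {C : ℝ} (hC : 0 ≤ C)
    (hf : ∑' k, ‖f k‖ ^ 2 ≤ C ^ 2) : ‖f‖ ≤ C :=
  lp.norm_le_of_tsum_le (by norm_num) hC (by simpa using hf)

theorem tsum_apply {ι : Type*} {f : ι → l2Z} (hf : Summable f) (k : ℤ) :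
    (∑' i, f i) k = ∑' i, f i k :=
  (lp.evalCLM ℂ _ 2 k).map_tsum hf

theorem norm_mul_apply_sq_le {c : ℤ → ℂ} {K : ℝ} (hc : ∀ j, ‖c j‖ ≤ K) (m : ℤ) (ψ : l2Z)
    (j : ℤ) : ‖c j * ψ (j + m)‖ ^ 2 ≤ K ^ 2 * ‖ψ (j + m)‖ ^ 2 := by
  rw [norm_mul, mul_pow]
  gcongr
  exact hc j

theorem summable_norm_sq_comp_add (ψ : l2Z) (m : ℤ) : Summable fun j => ‖ψ (j + m)‖ ^ 2 :=
  (Equiv.addRight m).summable_iff.2 (summable_norm_sq ψ)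

theorem memℓp_weightedShift {c : ℤ → ℂ} {K : ℝ} (hc : ∀ j, ‖c j‖ ≤ K) (m : ℤ) (ψ : l2Z) :
    Memℓp (fun j => c j * ψ (j + m)) 2 :=
  memℓp_iff.2 <| ((summable_norm_sq_comp_add ψ m).mul_left _).of_nonneg_of_le
    (fun _ => by positivity) (norm_mul_apply_sq_le hc m ψ)

def weightedShift (m : ℤ) (c : ℤ → ℂ) {K : ℝ} (hc : ∀ j, ‖c j‖ ≤ K) : l2Z →L[ℂ] l2Z :=
  LinearMap.mkContinuous
    { toFun := fun ψ => ⟨_, memℓp_weightedShift hc m ψ⟩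
      map_add' := fun ψ χ => by ext j; exact mul_add _ _ _
      map_smul' := fun z ψ => by ext j; simp [mul_left_comm] }
    K fun ψ => by
      have hK : 0 ≤ K := (norm_nonneg _).trans (hc 0)
      refine norm_le_of_tsum_le (by positivity) ?_
      calc ∑' j, ‖c j * ψ (j + m)‖ ^ 2 ≤ ∑' j, K ^ 2 * ‖ψ (j + m)‖ ^ 2 :=
            (memℓp_iff.1 (memℓp_weightedShift hc m ψ)).tsum_le_tsum
              (norm_mul_apply_sq_le hc m ψ) ((summable_norm_sq_comp_add ψ m).mul_left _)
        _ = (K * ‖ψ‖) ^ 2 := by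
          rw [tsum_mul_left, mul_pow, norm_sq_eq_tsum]
          exact congrArg _ ((Equiv.addRight m).tsum_eq fun k => ‖ψ k‖ ^ 2)

@[simp]
theorem weightedShift_apply (m : ℤ) {c : ℤ → ℂ} {K : ℝ} (hc : ∀ j, ‖c j‖ ≤ K)
    (ψ : l2Z) (j : ℤ) : weightedShift m c hc ψ j = c j * ψ (j + m) :=
  rfl

theorem norm_weightedShift_le (m : ℤ) {c : ℤ → ℂ} {K : ℝ} (hc : ∀ j, ‖c j‖ ≤ K) :
    ‖weightedShift m c hc‖ ≤ K :=
  LinearMap.mkContinuous_norm_le _ ((norm_nonneg _).trans (hc 0)) _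

def translate (m : ℤ) : l2Z →L[ℂ] l2Z :=
  weightedShift (-m) (fun _ => 1) (K := 1) fun _ => norm_one.le

@[simp]
theorem translate_apply (m : ℤ) (ψ : l2Z) (k : ℤ) : translate m ψ k = ψ (k - m) := by
  simp [translate, sub_eq_add_neg]

theorem norm_translate_le (m : ℤ) : ‖translate m‖ ≤ 1 :=
  norm_weightedShift_le _ _

def MemDomX (φ : l2Z) : Prop :=
  Summable fun k : ℤ => (1 + (k : ℝ) ^ 2) * ‖φ k‖ ^ 2

theorem memℓp_mulX {φ : l2Z} (hφ : MemDomX φ) : Memℓp (fun k : ℤ => (k : ℂ) * φ k) 2 :=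
  memℓp_iff.2 <| hφ.of_nonneg_of_le (fun _ => by positivity) fun k => by
    rw [norm_mul, mul_pow, Complex.norm_intCast, sq_abs]
    gcongr
    linarith

def mulX (φ : l2Z) (hφ : MemDomX φ) : l2Z :=
  ⟨_, memℓp_mulX hφ⟩

@[simp]
theorem mulX_apply {φ : l2Z} (hφ : MemDomX φ) (k : ℤ) : mulX φ hφ k = k * φ k :=
  rfl

def shiftTerm (m : ℤ) (φ : l2Z) (hφ : MemDomX φ) : l2Z :=
  translate m ((2 : ℂ) • mulX φ hφ + (m : ℂ) • φ)

theorem shiftTerm_apply (m : ℤ) {φ : l2Z} (hφ : MemDomX φ) (k : ℤ) :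
    shiftTerm m φ hφ k = (2 * k - m) * φ (k - m) := by
  simp only [shiftTerm, translate_apply, lp.coeFn_add, lp.coeFn_smul, Pi.add_apply,
    Pi.smul_apply, smul_eq_mul, mulX_apply]
  push_cast
  ring

theorem norm_shiftTerm_le (m : ℤ) {φ : l2Z} (hφ : MemDomX φ) :
    ‖shiftTerm m φ hφ‖ ≤ 2 * ‖mulX φ hφ‖ + |(m : ℝ)| * ‖φ‖ :=
  calc ‖shiftTerm m φ hφ‖ ≤ ‖(2 : ℂ) • mulX φ hφ + (m : ℂ) • φ‖ :=
        (translate m).le_of_opNorm_le (norm_translate_le m) _ |>.trans_eq (one_mul _)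
    _ ≤ 2 * ‖mulX φ hφ‖ + |(m : ℝ)| * ‖φ‖ := by
        refine (norm_add_le _ _).trans_eq ?_
        rw [norm_smul, norm_smul, Complex.norm_intCast, Complex.norm_ofNat]

end l2Z

open l2Z

theorem summable_pow_abs_mul_zpow_neg_abs {a : ℝ} (ha : 1 < a) (n : ℕ) :
    Summable fun m : ℤ => |(m : ℝ)| ^ n * a ^ (-|m|) := by
  have hgeom : Summable fun k : ℕ => (k : ℝ) ^ n * a⁻¹ ^ k := by
    refine summable_pow_mul_geometric_of_norm_lt_one n ?_
    rw [norm_inv, Real.norm_of_nonneg (by positivity)]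
    exact inv_lt_one_of_one_lt₀ ha
  have hnat : ∀ k : ℕ,
      |((k : ℤ) : ℝ)| ^ n * a ^ (-|(k : ℤ)|) = (k : ℝ) ^ n * a⁻¹ ^ k := by
    intro k
    rw [Int.cast_natCast, Nat.abs_cast, Nat.abs_cast, zpow_neg, zpow_natCast, inv_pow]
  refine Summable.of_nat_of_neg (hgeom.congr fun k => (hnat k).symm) ?_
  refine hgeom.congr fun k => ?_
  rw [← hnat, Int.cast_neg, abs_neg, abs_neg]

def aWeight (a : ℝ) (m : ℤ) : ℝ :=
  if m = 0 then 0 else a ^ (-|m|)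

theorem aWeight_neg (a : ℝ) (m : ℤ) : aWeight a (-m) = aWeight a m := by
  simp [aWeight]

theorem aWeight_nonneg {a : ℝ} (ha : 0 < a) (m : ℤ) : 0 ≤ aWeight a m := by
  unfold aWeight; split_ifs <;> positivity

theorem aWeight_le {a : ℝ} (ha : 0 < a) (m : ℤ) : aWeight a m ≤ a ^ (-|m|) := by
  unfold aWeight; split_ifs <;> first | positivity | rfl

theorem summable_aWeight_mul {a : ℝ} (ha : 1 < a) (n : ℕ) :
    Summable fun m : ℤ => aWeight a m * |(m : ℝ)| ^ n :=
  (summable_pow_abs_mul_zpow_neg_abs ha n).of_nonneg_of_le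
    (fun m => mul_nonneg (aWeight_nonneg (by linarith) m) (by positivity))
    fun m => by rw [mul_comm]; gcongr; exact aWeight_le (by linarith) m

theorem hasSum_shiftTerm {a : ℝ} (ha : 1 < a) {φ : l2Z} (hφ : MemDomX φ) {v : l2Z}
    (hv : ∀ k : ℤ, v k = (1 / 2 : ℂ) * ∑' m : ℤ,
      (if m = 0 then 0 else ((a ^ (-|m|) : ℝ) : ℂ) * (2 * (k : ℂ) - (m : ℂ)) * φ (k - m))) :
    HasSum (fun m => ((aWeight a m / 2 : ℝ) : ℂ) • shiftTerm m φ hφ) v := by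
  have hs : Summable fun m => ((aWeight a m / 2 : ℝ) : ℂ) • shiftTerm m φ hφ := by
    refine .of_norm_bounded (((summable_aWeight_mul ha 0).mul_right ‖mulX φ hφ‖).add
      ((summable_aWeight_mul ha 1).mul_right (‖φ‖ / 2))) fun m => ?_
    have hw := aWeight_nonneg (by linarith : 0 < a) m
    rw [norm_smul, Complex.norm_real, Real.norm_of_nonneg (by positivity)]
    calc aWeight a m / 2 * ‖shiftTerm m φ hφ‖
        ≤ aWeight a m / 2 * (2 * ‖mulX φ hφ‖ + |(m : ℝ)| * ‖φ‖) := by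
          gcongr; exact norm_shiftTerm_le m hφ
      _ = _ := by ring
  convert hs.hasSum
  ext k
  rw [hv, tsum_apply hs, ← tsum_mul_left]
  congr 1 with m
  simp only [lp.coeFn_smul, Pi.smul_apply, smul_eq_mul, shiftTerm_apply, aWeight]
  split_ifs <;> push_cast <;> ring

theorem inner_shiftTerm_sub_inner {γ : ℤ → ℂ} {D W : l2Z →L[ℂ] l2Z}
    (hD : ∀ (ψ : l2Z) (k : ℤ), D ψ k = γ k * ψ k) (m : ℤ)
    (hW : ∀ (ψ : l2Z) (k : ℤ), W ψ k = (2 * k + m) * (γ (k + m) - γ k) * ψ (k + m))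
    {φ ψ : l2Z} (hφ : MemDomX φ) (hψ : MemDomX ψ) :
    ⟪shiftTerm m φ hφ, D ψ⟫ - ⟪φ, D (shiftTerm (-m) ψ hψ)⟫ = ⟪φ, W ψ⟫ := by
  have h₁ := (Equiv.addRight m).hasSum_iff.2
    (lp.hasSum_inner (𝕜 := ℂ) (shiftTerm m φ hφ) (D ψ))
  refine (h₁.sub (lp.hasSum_inner (𝕜 := ℂ) φ _)).unique
    ((lp.hasSum_inner (𝕜 := ℂ) φ (W ψ)).congr_fun fun k => ?_)
  simp only [Function.comp_apply, Equiv.coe_addRight, hD, hW, shiftTerm_apply,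
    RCLike.inner_apply, add_sub_cancel_right, sub_neg_eq_add, map_mul, map_sub, map_intCast,
    map_ofNat]
  push_cast
  ring

theorem inner_commutator_eq {a : ℝ} {γ : ℤ → ℂ} {D : l2Z →L[ℂ] l2Z}
    (hD : ∀ (ψ : l2Z) (k : ℤ), D ψ k = γ k * ψ k) {W : ℤ → l2Z →L[ℂ] l2Z}
    (hW : ∀ m (ψ : l2Z) (k : ℤ), W m ψ k = (2 * k + m) * (γ (k + m) - γ k) * ψ (k + m))
    (hWs : Summable fun m => ((aWeight a m / 2 : ℝ) : ℂ) • W m)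
    {φ ψ u v : l2Z} (hφ : MemDomX φ) (hψ : MemDomX ψ)
    (hu : HasSum (fun m => ((aWeight a m / 2 : ℝ) : ℂ) • shiftTerm m φ hφ) u)
    (hv : HasSum (fun m => ((aWeight a m / 2 : ℝ) : ℂ) • shiftTerm m ψ hψ) v) :
    ⟪u, D ψ⟫ - ⟪φ, D v⟫ = ⟪φ, (∑' m, ((aWeight a m / 2 : ℝ) : ℂ) • W m) ψ⟫ := by
  set c : ℤ → ℂ := fun m => ((aWeight a m / 2 : ℝ) : ℂ)
  have h₁ : HasSum (fun m => c m * ⟪shiftTerm m φ hφ, D ψ⟫) ⟪u, D ψ⟫ :=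
    (hu.mapL (innerSLFlip ℂ (D ψ))).congr_fun fun m => by
      rw [innerSLFlip_apply_apply, inner_smul_left, Complex.conj_ofReal]
  have h₂ : HasSum (fun m => c m * ⟪φ, D (shiftTerm (-m) ψ hψ)⟫) ⟪φ, D v⟫ :=
    ((Equiv.neg ℤ).hasSum_iff.2 (hv.mapL ((innerSL ℂ φ).comp D))).congr_fun fun m => by
      simp only [Function.comp_apply, Equiv.neg_apply, ContinuousLinearMap.comp_apply,
        innerSL_apply_apply, map_smul, smul_eq_mul, c, aWeight_neg]
  have h₃ : HasSum (fun m => c m * ⟪φ, W m ψ⟫) ⟪φ, (∑' m, c m • W m) ψ⟫ := by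
    refine (hWs.hasSum.mapL ((innerSL ℂ φ).comp (ContinuousLinearMap.apply ℂ _ ψ))).congr_fun
      fun m => ?_
    simp only [ContinuousLinearMap.comp_apply, ContinuousLinearMap.apply_apply,
      innerSL_apply_apply, smul_apply, inner_smul_right, c]
  refine (h₁.sub h₂).unique (h₃.congr_fun fun m => ?_)
  rw [← mul_sub, inner_shiftTerm_sub_inner hD m (hW m) hφ hψ]

section DifferenceBound

variable {γ : ℤ → ℂ} {M : ℝ} (h₁ : ∀ k, ‖γ k‖ ≤ M)
  (h₂ : ∀ k : ℤ, ‖(k : ℂ) * (γ k - γ (k + 1))‖ ≤ M)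
include h₁ h₂

theorem norm_mul_sub_succ_le (k t : ℤ) :
    ‖(2 * k + t) * (γ (k + 1) - γ k)‖ ≤ 2 * (1 + |(t : ℝ)|) * M := by
  have hk : ‖(k : ℂ) * (γ (k + 1) - γ k)‖ ≤ M := by
    rw [← norm_neg, ← mul_neg, neg_sub]; exact h₂ k
  have hd : ‖γ (k + 1) - γ k‖ ≤ 2 * M := by
    linarith [norm_sub_le (γ (k + 1)) (γ k), h₁ k, h₁ (k + 1)]
  calc ‖(2 * k + t) * (γ (k + 1) - γ k)‖
      ≤ 2 * ‖(k : ℂ) * (γ (k + 1) - γ k)‖ + |(t : ℝ)| * ‖γ (k + 1) - γ k‖ := by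
        rw [add_mul, mul_assoc]
        refine (norm_add_le _ _).trans_eq ?_
        rw [norm_mul (2 : ℂ), norm_mul (t : ℂ), Complex.norm_ofNat, Complex.norm_intCast]
    _ ≤ 2 * M + |(t : ℝ)| * (2 * M) := by gcongr
    _ = 2 * (1 + |(t : ℝ)|) * M := by ring

theorem norm_mul_sub_add_natCast_le (j : ℤ) (n : ℕ) :
    ‖(2 * j + n) * (γ (j + n) - γ j)‖ ≤ 2 * n * (1 + n) * M := by
  have htel : (2 * j + n : ℂ) * (γ (j + n) - γ j) =
      ∑ i ∈ Finset.range n, (2 * (j + i : ℤ) + (n - 2 * i : ℤ)) *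
        (γ (j + i + 1) - γ (j + i)) := by
    have hsum :
        ∑ i ∈ Finset.range n, (γ (j + (i + 1 : ℕ)) - γ (j + i)) = γ (j + n) - γ j := by
      rw [Finset.sum_range_sub (fun i : ℕ => γ (j + i))]
      simp
    rw [← hsum, Finset.mul_sum]
    refine Finset.sum_congr rfl fun i _ => ?_
    push_cast
    ring_nf
  have hM : 0 ≤ M := (norm_nonneg _).trans (h₁ 0)
  have hterm : ∀ i ∈ Finset.range n, ‖(2 * ((j + i : ℤ) : ℂ) + ((n - 2 * i : ℤ) : ℂ)) *
      (γ (j + i + 1) - γ (j + i))‖ ≤ 2 * (1 + n) * M := fun i hi => by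
    refine (norm_mul_sub_succ_le h₁ h₂ _ _).trans ?_
    have hi : |((n : ℤ) - 2 * i)| ≤ n := by
      have := Finset.mem_range.1 hi
      exact abs_le.2 ⟨by omega, by omega⟩
    have hi' : |((n - 2 * i : ℤ) : ℝ)| ≤ n := by exact_mod_cast hi
    gcongr
  calc _ ≤ ∑ _i ∈ Finset.range n, 2 * (1 + n) * M := by
        rw [htel]; exact norm_sum_le_of_le _ hterm
    _ = 2 * n * (1 + n) * M := by rw [Finset.sum_const, Finset.card_range, nsmul_eq_mul]; ring

theorem norm_mul_sub_add_le (j m : ℤ) :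
    ‖(2 * j + m) * (γ (j + m) - γ j)‖ ≤ 4 * (m : ℝ) ^ 2 * M := by
  have hM : 0 ≤ M := (norm_nonneg _).trans (h₁ 0)
  obtain ⟨n, rfl | rfl⟩ := Int.eq_nat_or_neg m
  all_goals
    have hn : 2 * (n : ℝ) * (1 + n) * M ≤ 4 * (n : ℝ) ^ 2 * M := by
      have : (n : ℝ) ≤ n ^ 2 := by exact_mod_cast Nat.le_self_pow two_ne_zero n
      gcongr ?_ * M
      linarith
  · exact (norm_mul_sub_add_natCast_le h₁ h₂ j n).trans (by simpa using hn)
  · have h := norm_mul_sub_add_natCast_le h₁ h₂ (j - n) n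
    rw [sub_add_cancel, ← norm_neg] at h
    refine (le_of_eq ?_).trans (h.trans (by simpa using hn))
    congr 1
    simp only [Int.cast_neg, ← sub_eq_add_neg]
    push_cast
    ring

end DifferenceBound

section q1

variable {γ : ℤ → ℂ} (hb₁ : BddAbove (Set.range fun k : ℤ => ‖γ k‖))
  (hb₂ : BddAbove (Set.range fun k : ℤ => ‖(k : ℂ) * (γ k - γ (k + 1))‖))
include hb₁ hb₂

theorem norm_le_q1 (k : ℤ) : ‖γ k‖ ≤ q1 γ :=
  le_add_of_le_of_nonneg (le_ciSup hb₁ k) ((norm_nonneg _).trans (le_ciSup hb₂ 0))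

theorem norm_mul_sub_le_q1 (k : ℤ) : ‖(k : ℂ) * (γ k - γ (k + 1))‖ ≤ q1 γ :=
  le_add_of_nonneg_of_le ((norm_nonneg _).trans (le_ciSup hb₁ 0)) (le_ciSup hb₂ k)

end q1

section WeightedSeries

variable {a : ℝ} {E : Type*} [NormedAddCommGroup E] [NormedSpace ℂ E] {W : ℤ → E} {M : ℝ}

theorem norm_aWeight_smul_le (ha : 0 < a) (hW : ∀ m : ℤ, ‖W m‖ ≤ 4 * (m : ℝ) ^ 2 * M)
    (m : ℤ) :
    ‖((aWeight a m / 2 : ℝ) : ℂ) • W m‖ ≤ aWeight a m * |(m : ℝ)| ^ 2 * (2 * M) := by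
  have hw := aWeight_nonneg ha m
  rw [norm_smul, Complex.norm_real, Real.norm_of_nonneg (by positivity), sq_abs]
  calc aWeight a m / 2 * ‖W m‖ ≤ aWeight a m / 2 * (4 * (m : ℝ) ^ 2 * M) := by
        gcongr; exact hW m
    _ = _ := by ring

theorem summable_aWeight_smul [CompleteSpace E] (ha : 1 < a)
    (hW : ∀ m : ℤ, ‖W m‖ ≤ 4 * (m : ℝ) ^ 2 * M) :
    Summable fun m => ((aWeight a m / 2 : ℝ) : ℂ) • W m :=
  .of_norm_bounded ((summable_aWeight_mul ha 2).mul_right _)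
    (norm_aWeight_smul_le (by linarith) hW)

theorem norm_tsum_aWeight_smul_le (ha : 1 < a) (hW : ∀ m : ℤ, ‖W m‖ ≤ 4 * (m : ℝ) ^ 2 * M) :
    ‖∑' m, ((aWeight a m / 2 : ℝ) : ℂ) • W m‖ ≤
      2 * (∑' m : ℤ, aWeight a m * |(m : ℝ)| ^ 2) * M :=
  (tsum_of_norm_bounded ((summable_aWeight_mul ha 2).hasSum.mul_right (2 * M))
    (norm_aWeight_smul_le (by linarith) hW)).trans_eq (by ring)

end WeightedSeries

/-- Proposition 3.3 ("criteria1"): for `a > 1`, if `q₁(γ) < ∞` then the diagonal operator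
`D_γ` is of class `C¹(A_a)`, and the commutator `B = ad_{A_a} D_γ` satisfies
`‖B‖ ≤ C_a·q₁(γ)` for a constant `C_a > 0` depending only on `a`. -/
theorem stmt3 (a : ℝ) (ha : 1 < a)
    -- the conjugate operator A_a, with domain D_X and the prescribed action
    (Aa : l2Z →ₗ.[ℂ] l2Z)
    (hdom : ∀ φ : l2Z,
      φ ∈ Aa.domain ↔ Summable fun k : ℤ => (1 + (k : ℝ) ^ 2) * ‖φ k‖ ^ 2)
    (haction : ∀ (φ : l2Z) (hφ : φ ∈ Aa.domain) (k : ℤ),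
      (Aa ⟨φ, hφ⟩ : l2Z) k = (1 / 2 : ℂ) * ∑' m : ℤ,
        (if m = 0 then 0 else
          ((a ^ (-|m|) : ℝ) : ℂ) * (2 * (k : ℂ) - (m : ℂ)) * φ (k - m))) :
    ∃ Ca > (0 : ℝ), ∀ (γ : ℤ → ℂ) (Dγ : l2Z →L[ℂ] l2Z),
      -- γ bounded with q₁(γ) < ∞
      BddAbove (Set.range fun k : ℤ => ‖γ k‖) →
      BddAbove (Set.range fun k : ℤ => ‖(k : ℂ) * (γ k - γ (k + 1))‖) →
      -- Dγ the associated diagonal operator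
      (∀ (φ : l2Z) (k : ℤ), (Dγ φ) k = γ k * φ k) →
      -- then Dγ ∈ C¹(A_a) with commutator B, and ‖B‖ ≤ C_a·q₁(γ)
      ∃ B : l2Z →L[ℂ] l2Z,
        (∀ φ ψ : Aa.domain,
          ⟪Aa φ, Dγ (ψ : l2Z)⟫ - ⟪(φ : l2Z), Dγ (Aa ψ)⟫ = ⟪(φ : l2Z), B (ψ : l2Z)⟫) ∧
        ‖B‖ ≤ Ca * q1 γ := by
  have ha₀ : 0 < a := by linarith
  refine ⟨2 * ∑' m : ℤ, aWeight a m * |(m : ℝ)| ^ 2, ?_, fun γ Dγ hb₁ hb₂ hD => ?_⟩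
  · have h₁ : 0 < aWeight a 1 * |((1 : ℤ) : ℝ)| ^ 2 := by simp [aWeight]; positivity
    have := (summable_aWeight_mul ha 2).tsum_pos
      (fun m => mul_nonneg (aWeight_nonneg ha₀ m) (by positivity)) 1 h₁
    positivity
  let W : ℤ → l2Z →L[ℂ] l2Z := fun m =>
    weightedShift m (fun j => (2 * j + m) * (γ (j + m) - γ j))
      fun j => norm_mul_sub_add_le (norm_le_q1 hb₁ hb₂) (norm_mul_sub_le_q1 hb₁ hb₂) j m
  have hW : ∀ m, ‖W m‖ ≤ 4 * (m : ℝ) ^ 2 * q1 γ := fun m => norm_weightedShift_le _ _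
  refine ⟨∑' m, ((aWeight a m / 2 : ℝ) : ℂ) • W m, fun φ ψ => ?_,
    norm_tsum_aWeight_smul_le ha hW⟩
  have hφ : MemDomX φ := (hdom φ).1 φ.2
  have hψ : MemDomX ψ := (hdom ψ).1 ψ.2
  exact inner_commutator_eq hD (fun m ψ k => weightedShift_apply _ _ ψ k)
    (summable_aWeight_smul ha hW) hφ hψ (hasSum_shiftTerm ha hφ (haction φ φ.2))
    (hasSum_shiftTerm ha hψ (haction ψ ψ.2))
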